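/- Let G = (V,E) be a finite connected graph, p > 1 with dual exponent q, and A,B ⊆ V nonempty disjoint. Let Û : V → ℝ be the capacity-minimizing potential (Û = 0 on A, Û = 1 on B, minimizing ∑_{{x,y}∈E} |Û(x)−Û(y)|^p). Then the optimal Θ(A,B)-admissible density is ρ̂({x,y}) = |Û(x)−Û(y)|, and the energy-minimizing unit flow from A to B is F(x,y) = Mod_p(Θ(A,B),G)^{−1} · sgn(Û(y)−Û(x))·|Û(y)−Û(x)|^{p−1} for all {x,y} ∈ E. -/

import Mathlib

open Classical Real

noncomputable section

namespace Paper

variable {V : Type*} [Fintype V] [DecidableEq V]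

/-- A path in a graph `G`, packaged together with its endpoints. -/
def GPath (G : SimpleGraph V) : Type _ := Σ u v : V, G.Walk u v

/-- The `ρ`-length of a path: the sum of `ρ` over its edges. -/
def lenρ (G : SimpleGraph V) (ρ : Sym2 V → ℝ) (θ : GPath G) : ℝ :=
  (θ.2.2.edges.map ρ).sum

/-- A density on a graph: nonnegative and supported on the edge set. -/
def IsDensity (G : SimpleGraph V) (ρ : Sym2 V → ℝ) : Prop :=
  (∀ e, 0 ≤ ρ e) ∧ ∀ e, e ∉ G.edgeSet → ρ e = 0

/-- `ρ` is admissible for the path family `Θ`. -/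
def Admissible (G : SimpleGraph V) (Θ : Set (GPath G)) (ρ : Sym2 V → ℝ) : Prop :=
  (∀ e, 0 ≤ ρ e) ∧ ∀ θ ∈ Θ, 1 ≤ lenρ G ρ θ

/-- The `p`-mass of a density: `∑_{e ∈ E} ρ(e)^p`. -/
def massE (G : SimpleGraph V) (p : ℝ) (ρ : Sym2 V → ℝ) : ℝ :=
  ∑ e : Sym2 V, if e ∈ G.edgeSet then ρ e ^ p else 0

/-- The edge `p`-modulus of a family of paths. -/
def ModE (G : SimpleGraph V) (p : ℝ) (Θ : Set (GPath G)) : ℝ :=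
  sInf {m | ∃ ρ, Admissible G Θ ρ ∧ massE G p ρ = m}

/-- The optimal admissible density for a path family. -/
def IsOptDensityE (G : SimpleGraph V) (p : ℝ) (Θ : Set (GPath G)) (ρ : Sym2 V → ℝ) : Prop :=
  IsDensity G ρ ∧ Admissible G Θ ρ ∧
    ∀ σ, IsDensity G σ → Admissible G Θ σ → massE G p ρ ≤ massE G p σ

/-- The family `Θ(A,B)` of paths connecting `A` to `B`. -/
def pathsBetween (G : SimpleGraph V) (A B : Set V) : Set (GPath G) :=
  {θ | θ.1 ∈ A ∧ θ.2.1 ∈ B}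

/-- Vertex `p`-modulus of a family of vertex sets. -/
def ModV (p : ℝ) (Θh : Set (Finset V)) : ℝ :=
  sInf {m | ∃ ρ : V → ℝ, (∀ v, 0 ≤ ρ v) ∧ (∀ s ∈ Θh, 1 ≤ ∑ v ∈ s, ρ v) ∧
    (∑ v : V, ρ v ^ p) = m}

/-- Maximum degree of a graph. -/
def maxDeg (G : SimpleGraph V) : ℕ :=
  Finset.univ.sup fun v : V => Nat.card {u // G.Adj v u}

/-- `|U(x) − U(y)|` as a function on unordered pairs. -/
def ediff (U : V → ℝ) : Sym2 V → ℝ :=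
  Sym2.lift ⟨fun x y => |U x - U y|, fun x y => abs_sub_comm (U x) (U y)⟩

/-- The `p`-energy `∑_{{x,y}∈E} |U(x)−U(y)|^p` of a potential. -/
def capMass (G : SimpleGraph V) (p : ℝ) (U : V → ℝ) : ℝ :=
  ∑ e : Sym2 V, if e ∈ G.edgeSet then ediff U e ^ p else 0

/-- The `p`-capacity from `A` to `B`. -/
def CapE (G : SimpleGraph V) (p : ℝ) (A B : Finset V) : ℝ :=
  sInf {m | ∃ U : V → ℝ, (∀ a ∈ A, U a = 0) ∧ (∀ b ∈ B, U b = 1) ∧ capMass G p U = m}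

/-- `U` is `p`-harmonic in `A`. -/
def pHarmOn (G : SimpleGraph V) (p : ℝ) (U : V → ℝ) (A : Set V) : Prop :=
  ∀ x ∈ A, (∑ y : V,
    if G.Adj x y then Real.sign (U x - U y) * |U x - U y| ^ (p - 1) else 0) = 0

/-- The (outer) vertex boundary of `A`. -/
def vBoundary (G : SimpleGraph V) (A : Set V) : Set V :=
  {x | x ∉ A ∧ ∃ y ∈ A, G.Adj x y}

/-- A flow from `A` to `B`: antisymmetric, supported on edges, divergence free off `A ∪ B`. -/
def IsFlow (G : SimpleGraph V) (A B : Finset V) (F : V → V → ℝ) : Prop :=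
  (∀ x y, F x y = - F y x) ∧ (∀ x y, ¬ G.Adj x y → F x y = 0) ∧
  (∀ x, x ∉ A → x ∉ B → (∑ y : V, F x y) = 0)

/-- The total flow out of `A`. -/
def totalFlow (A : Finset V) (F : V → V → ℝ) : ℝ := ∑ x ∈ A, ∑ y : V, F x y

/-- `|F(e)|` as a function on unordered pairs. -/
def flowAbs (F : V → V → ℝ) : Sym2 V → ℝ :=
  Sym2.lift ⟨fun x y => |F x y| ⊔ |F y x|, fun x y => sup_comm _ _⟩

/-- The `q`-energy of a flow. -/
def energyQ (G : SimpleGraph V) (q : ℝ) (F : V → V → ℝ) : ℝ :=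
  ∑ e : Sym2 V, if e ∈ G.edgeSet then flowAbs F e ^ q else 0

/-- The minimal `q`-energy among unit flows from `A` to `B`. -/
def EminQ (G : SimpleGraph V) (q : ℝ) (A B : Finset V) : ℝ :=
  sInf {m | ∃ F, IsFlow G A B F ∧ totalFlow A F = 1 ∧ energyQ G q F = m}

end Paper

/-!
The gradient `|∇Û|` is admissible for `Θ(A,B)`; conversely, for any admissible `σ` the
`σ`-distance from `A`, truncated at `1`, is a competitor for the capacity whose energy is at most
the `σ`-mass. Hence `Mod_p = Cap_p = E_p(Û)`, the `p`-energy of `Û`, and `|∇Û|` is the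
optimal density.

The first variation of the energy makes `Û` `p`-harmonic off `A ∪ B`, so the `p`-flux
`sgn(∇Û)|∇Û|^{p-1}` is divergence free. Summing by parts against `Û`, a flow `F` satisfies
`∑_{x,y} (Û(y) - Û(x)) F(x,y) = 2 · (total flow of F)`. For the `p`-flux the left side is
`2 Cap_p`, so dividing by `Mod_p = Cap_p` gives a unit flow, whose `q`-energy is `Cap_p^{1-q}`
because `(p-1)q = p`. For any other unit flow the same identity gives
`1 ≤ ∑_e |∇Û(e)| |F(e)|`, and Hölder turns this into `E_q(F) ≥ Cap_p^{1-q}`.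
-/

namespace Paper

open Finset

/-- The derivative of `|t|^p / p`. -/
def signPow (p t : ℝ) : ℝ := Real.sign t * |t| ^ (p - 1)

lemma signPow_neg (p t : ℝ) : signPow p (-t) = -signPow p t := by
  rw [signPow, signPow, Real.sign_neg, abs_neg, neg_mul]

lemma abs_signPow {p : ℝ} (hp : p ≠ 1) (t : ℝ) : |signPow p t| = |t| ^ (p - 1) := by
  rcases eq_or_ne t 0 with rfl | ht
  · simp [signPow, Real.zero_rpow (sub_ne_zero.mpr hp)]
  · rw [signPow, abs_mul, abs_of_nonneg (Real.rpow_nonneg (abs_nonneg t) _)]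
    rcases Real.sign_apply_eq_of_ne_zero t ht with h | h <;> simp [h]

lemma mul_signPow {p : ℝ} (hp : p ≠ 0) (t : ℝ) : t * signPow p t = |t| ^ p := by
  rcases eq_or_ne t 0 with rfl | ht
  · simp [Real.zero_rpow hp]
  · have hsign : t * Real.sign t = |t| := by
      rcases lt_or_gt_of_ne ht with h | h
      · rw [Real.sign_of_neg h, abs_of_neg h]; ring
      · rw [Real.sign_of_pos h, abs_of_pos h]; ring
    rw [signPow, ← mul_assoc, hsign, ← Real.rpow_one_add' (abs_nonneg t) (by simpa using hp)]
    ring_nf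

lemma hasDerivAt_abs_add_mul_rpow {p : ℝ} (hp : 1 < p) (c a : ℝ) :
    HasDerivAt (fun t : ℝ => |c + t * a| ^ p) (p * signPow p c * a) 0 := by
  have hline : HasDerivAt (fun t : ℝ => c + t * a) a 0 := by
    simpa using ((hasDerivAt_id (0 : ℝ)).mul_const a).const_add c
  have hpow : HasDerivAt (fun s : ℝ => |s| ^ p) (p * signPow p c) c := by
    refine (hasDerivAt_abs_rpow c hp).congr_deriv ?_
    rcases eq_or_ne c 0 with rfl | hc
    · simp [signPow]
    · rw [signPow, show p - 1 = (p - 2) + 1 by ring,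
        Real.rpow_add_one (abs_ne_zero.mpr hc), mul_comm (Real.sign c), mul_assoc _ |c|,
        mul_comm |c|]
      rcases lt_or_gt_of_ne hc with h | h
      · rw [Real.sign_of_neg h, abs_of_neg h]; ring
      · rw [Real.sign_of_pos h, abs_of_pos h]; ring
  exact hpow.comp_of_eq 0 hline (by simp)

lemma rpow_one_sub_le_sum_rpow {ι : Type*} (s : Finset ι) {f g : ι → ℝ} {p q : ℝ}
    (hpq : p.HolderConjugate q) (hf : ∀ i ∈ s, 0 ≤ f i) (hg : ∀ i ∈ s, 0 ≤ g i)
    (hfg : 1 ≤ ∑ i ∈ s, f i * g i) :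
    (∑ i ∈ s, f i ^ p) ^ (1 - q) ≤ ∑ i ∈ s, g i ^ q := by
  set F := ∑ i ∈ s, f i ^ p
  set E := ∑ i ∈ s, g i ^ q
  have hF0 : 0 ≤ F := sum_nonneg fun i hi => Real.rpow_nonneg (hf i hi) p
  have hE0 : 0 ≤ E := sum_nonneg fun i hi => Real.rpow_nonneg (hg i hi) q
  have holder : 1 ≤ F ^ (1 / p) * E ^ (1 / q) :=
    hfg.trans (Real.inner_le_Lp_mul_Lq_of_nonneg s hpq hf hg)
  have hFp : 0 < F ^ (1 / p) := by
    refine lt_of_le_of_ne (Real.rpow_nonneg hF0 _) fun h => ?_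
    rw [← h, zero_mul] at holder
    linarith
  have hF : 0 < F := hF0.lt_of_ne fun h => by
    rw [← h, Real.zero_rpow (one_div_pos.mpr hpq.pos).ne'] at hFp
    exact lt_irrefl 0 hFp
  have hinv : F ^ (-(1 / p)) ≤ E ^ (1 / q) := by
    rw [Real.rpow_neg hF0]
    exact (inv_le_iff_one_le_mul₀' hFp).mpr holder
  have hexp : -(1 / p) * q = 1 - q := by
    have := hpq.symm.sub_one_mul_conj
    field_simp [hpq.ne_zero]
    linarith
  calc F ^ (1 - q) = (F ^ (-(1 / p))) ^ q := by rw [← Real.rpow_mul hF0, hexp]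
    _ ≤ (E ^ (1 / q)) ^ q := Real.rpow_le_rpow (Real.rpow_nonneg hF0 _) hinv hpq.symm.nonneg
    _ = E := by rw [← Real.rpow_mul hE0, one_div_mul_cancel hpq.symm.ne_zero, Real.rpow_one]

variable {V : Type*}

section WalkDist

variable {G : SimpleGraph V} {σ : Sym2 V → ℝ} {A : Finset V}

def walkDist (G : SimpleGraph V) (σ : Sym2 V → ℝ) (A : Finset V) (x : V) : ℝ :=
  sInf {r | ∃ a ∈ A, ∃ w : G.Walk a x, (w.edges.map σ).sum = r}

lemma sum_edges_map_nonneg (hσ : ∀ e, 0 ≤ σ e) {u v : V} (w : G.Walk u v) :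
    0 ≤ (w.edges.map σ).sum :=
  List.sum_nonneg fun _ he => by obtain ⟨e, -, rfl⟩ := List.mem_map.mp he; exact hσ e

lemma walkDist_le (hσ : ∀ e, 0 ≤ σ e) {a x : V} (ha : a ∈ A) (w : G.Walk a x) :
    walkDist G σ A x ≤ (w.edges.map σ).sum :=
  csInf_le ⟨0, by rintro _ ⟨b, -, w', rfl⟩; exact sum_edges_map_nonneg hσ w'⟩ ⟨a, ha, w, rfl⟩

lemma le_walkDist (hG : G.Connected) (hA : A.Nonempty) {x : V} {r : ℝ}
    (h : ∀ a ∈ A, ∀ w : G.Walk a x, r ≤ (w.edges.map σ).sum) : r ≤ walkDist G σ A x := by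
  obtain ⟨a, ha⟩ := hA
  refine le_csInf ⟨_, a, ha, (hG.preconnected a x).some, rfl⟩ ?_
  rintro _ ⟨b, hb, w, rfl⟩
  exact h b hb w

lemma walkDist_le_add (hG : G.Connected) (hA : A.Nonempty) (hσ : ∀ e, 0 ≤ σ e) {x y : V}
    (hxy : G.Adj x y) : walkDist G σ A y ≤ walkDist G σ A x + σ s(x, y) := by
  rw [← sub_le_iff_le_add]
  refine le_walkDist hG hA fun a ha w => sub_le_iff_le_add.mpr ?_
  calc walkDist G σ A y ≤ ((w.concat hxy).edges.map σ).sum := walkDist_le hσ ha _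
    _ = (w.edges.map σ).sum + σ s(x, y) := by
      rw [SimpleGraph.Walk.edges_concat, List.map_concat, List.sum_concat]

lemma abs_walkDist_sub_le (hG : G.Connected) (hA : A.Nonempty) (hσ : ∀ e, 0 ≤ σ e) {x y : V}
    (hxy : G.Adj x y) : |walkDist G σ A x - walkDist G σ A y| ≤ σ s(x, y) := by
  have hyx := walkDist_le_add hG hA hσ hxy.symm
  rw [Sym2.eq_swap] at hyx
  rw [abs_sub_le_iff]
  constructor <;> linarith [walkDist_le_add hG hA hσ hxy]

end WalkDist

lemma ediff_nonneg (W : V → ℝ) (e : Sym2 V) : 0 ≤ ediff W e :=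
  Sym2.ind (fun x y => abs_nonneg (W x - W y)) e

def gradDensity (G : SimpleGraph V) (U : V → ℝ) (e : Sym2 V) : ℝ :=
  if e ∈ G.edgeSet then ediff U e else 0

lemma gradDensity_nonneg (G : SimpleGraph V) (U : V → ℝ) (e : Sym2 V) :
    0 ≤ gradDensity G U e := by
  unfold gradDensity; split_ifs
  · exact ediff_nonneg U e
  · exact le_rfl

lemma isDensity_gradDensity (G : SimpleGraph V) (U : V → ℝ) : IsDensity G (gradDensity G U) :=
  ⟨gradDensity_nonneg G U, fun _ he => if_neg he⟩

lemma abs_sub_le_sum_gradDensity {G : SimpleGraph V} (U : V → ℝ) {u v : V}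
    (w : G.Walk u v) :
    |U v - U u| ≤ (w.edges.map (gradDensity G U)).sum := by
  induction w with
  | nil => simp
  | @cons x y z hxy w ih =>
    rw [SimpleGraph.Walk.edges_cons, List.map_cons, List.sum_cons]
    calc |U z - U x| ≤ |U x - U y| + |U z - U y| := by
          simpa only [abs_sub_comm (U y) (U x), add_comm] using abs_sub_le (U z) (U y) (U x)
      _ ≤ gradDensity G U s(x, y) + (w.edges.map (gradDensity G U)).sum := by
          rw [gradDensity, if_pos (G.mem_edgeSet.mpr hxy)]; exact add_le_add le_rfl ih

lemma admissible_gradDensity (G : SimpleGraph V) {A B : Finset V} {U : V → ℝ}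
    (hU0 : ∀ a ∈ A, U a = 0) (hU1 : ∀ b ∈ B, U b = 1) :
    Admissible G (pathsBetween G (↑A : Set V) (↑B : Set V)) (gradDensity G U) := by
  refine ⟨gradDensity_nonneg G U, ?_⟩
  rintro ⟨a, b, w⟩ ⟨ha, hb⟩
  show 1 ≤ (w.edges.map _).sum
  simpa [hU0 a ha, hU1 b hb] using abs_sub_le_sum_gradDensity U w

def flowDensity (G : SimpleGraph V) (F : V → V → ℝ) (e : Sym2 V) : ℝ :=
  if e ∈ G.edgeSet then flowAbs F e else 0

lemma flowDensity_nonneg (G : SimpleGraph V) (F : V → V → ℝ) (e : Sym2 V) :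
    0 ≤ flowDensity G F e := by
  unfold flowDensity; split_ifs
  · exact Sym2.ind (fun x y => (abs_nonneg (F x y)).trans (le_max_left _ _)) e
  · exact le_rfl

def pFlux (G : SimpleGraph V) (p : ℝ) (U : V → ℝ) (u v : V) : ℝ :=
  if G.Adj u v then signPow p (U u - U v) else 0

lemma pFlux_antisymm (G : SimpleGraph V) (p : ℝ) (U : V → ℝ) (u v : V) :
    pFlux G p U u v = -pFlux G p U v u := by
  unfold pFlux
  by_cases h : G.Adj u v
  · rw [if_pos h, if_pos h.symm, ← signPow_neg, neg_sub]
  · rw [if_neg h, if_neg fun h' => h h'.symm, neg_zero]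

def ohmFlow (G : SimpleGraph V) (p : ℝ) (U : V → ℝ) (c : ℝ) (x y : V) : ℝ :=
  if G.Adj x y then c * signPow p (U y - U x) else 0

lemma ohmFlow_eq_neg_mul_pFlux (G : SimpleGraph V) (p : ℝ) (U : V → ℝ) (c : ℝ) (x y : V) :
    ohmFlow G p U c x y = -(c * pFlux G p U x y) := by
  unfold ohmFlow pFlux
  split_ifs
  · rw [← neg_sub, signPow_neg, mul_neg]
  · rw [mul_zero, neg_zero]

variable [Fintype V]

lemma sum_adj_eq_two_nsmul_sum_edgeSet {M : Type*} [AddCommMonoid M] (G : SimpleGraph V)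
    (f : Sym2 V → M) :
    ∑ u, ∑ v, (if G.Adj u v then f s(u, v) else 0) =
      2 • ∑ e, (if e ∈ G.edgeSet then f e else 0) := by
  have hdarts : ∑ u, ∑ v, (if G.Adj u v then f s(u, v) else 0) = ∑ d : G.Dart, f d.edge := by
    rw [← Fintype.sum_prod_type', ← sum_filter]
    refine sum_bij' (fun x hx => ⟨x, (mem_filter.mp hx).2⟩) (fun d _ => d.toProd)
      (by simp) (by simp [SimpleGraph.Dart.adj]) (by simp) (by simp)
      (by simp [SimpleGraph.Dart.edge])
  rw [hdarts, ← sum_filter, smul_sum, ← sum_fiberwise_of_maps_to (g := SimpleGraph.Dart.edge)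
    (t := {e | e ∈ G.edgeSet}) (fun d _ => by simp)]
  refine sum_congr rfl fun e he => ?_
  rw [sum_congr rfl fun d hd => congrArg f (mem_filter.mp hd).2, sum_const,
    G.dart_edge_fiber_card e (by simpa using he)]

lemma sum_sub_mul_eq_two_mul_sum_mul_sum (F : V → V → ℝ) (hF : ∀ x y, F x y = -F y x)
    (h : V → ℝ) :
    ∑ u, ∑ v, (h u - h v) * F u v = 2 * ∑ u, h u * ∑ v, F u v := by
  have hswap : ∑ u, ∑ v, h v * F u v = -∑ u, ∑ v, h u * F u v := by
    rw [sum_comm, ← sum_neg_distrib]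
    exact sum_congr rfl fun u _ => by
      rw [← sum_neg_distrib]; exact sum_congr rfl fun v _ => by rw [hF v u]; ring
  have hmul : ∑ u, h u * ∑ v, F u v = ∑ u, ∑ v, h u * F u v := by simp only [mul_sum]
  rw [hmul]
  simp only [sub_mul, sum_sub_distrib, hswap]
  ring

lemma capMass_nonneg (G : SimpleGraph V) (p : ℝ) (W : V → ℝ) : 0 ≤ capMass G p W :=
  sum_nonneg fun e _ => by
    split_ifs
    · exact Real.rpow_nonneg (ediff_nonneg W e) p
    · exact le_rfl

lemma two_mul_capMass (G : SimpleGraph V) (p : ℝ) (W : V → ℝ) :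
    2 * capMass G p W = ∑ u, ∑ v, if G.Adj u v then |W u - W v| ^ p else 0 := by
  rw [capMass, two_mul, ← two_nsmul, ← sum_adj_eq_two_nsmul_sum_edgeSet]
  rfl

lemma capE_le_capMass (G : SimpleGraph V) (p : ℝ) {A B : Finset V} {W : V → ℝ}
    (hW0 : ∀ a ∈ A, W a = 0) (hW1 : ∀ b ∈ B, W b = 1) : CapE G p A B ≤ capMass G p W :=
  csInf_le ⟨0, by rintro _ ⟨W', -, -, rfl⟩; exact capMass_nonneg G p W'⟩ ⟨W, hW0, hW1, rfl⟩

lemma massE_nonneg (G : SimpleGraph V) (p : ℝ) {ρ : Sym2 V → ℝ} (hρ : ∀ e, 0 ≤ ρ e) :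
    0 ≤ massE G p ρ :=
  sum_nonneg fun e _ => by
    split_ifs
    · exact Real.rpow_nonneg (hρ e) p
    · exact le_rfl

lemma massE_eq_sum_rpow (G : SimpleGraph V) {p : ℝ} (hp : p ≠ 0) {ρ : Sym2 V → ℝ}
    (hρ : ∀ e ∉ G.edgeSet, ρ e = 0) : massE G p ρ = ∑ e, ρ e ^ p :=
  sum_congr rfl fun e _ => by
    split_ifs with he
    · rfl
    · rw [hρ e he, Real.zero_rpow hp]

lemma massE_gradDensity (G : SimpleGraph V) (p : ℝ) (U : V → ℝ) :
    massE G p (gradDensity G U) = capMass G p U :=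
  sum_congr rfl fun e _ => by by_cases he : e ∈ G.edgeSet <;> simp [gradDensity, he]

lemma massE_flowDensity (G : SimpleGraph V) (q : ℝ) (F : V → V → ℝ) :
    massE G q (flowDensity G F) = energyQ G q F :=
  sum_congr rfl fun e _ => by by_cases he : e ∈ G.edgeSet <;> simp [flowDensity, he]

/-- The `σ`-distance from `A`, truncated at `1`, is a competitor whose edge differences are
dominated by `σ`. -/
lemma capE_le_massE (G : SimpleGraph V) (hG : G.Connected) {p : ℝ} (hp : 0 ≤ p)
    {A B : Finset V} (hA : A.Nonempty) {σ : Sym2 V → ℝ}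
    (hσ : Admissible G (pathsBetween G (↑A : Set V) (↑B : Set V)) σ) :
    CapE G p A B ≤ massE G p σ := by
  set W : V → ℝ := fun x => min (walkDist G σ A x) 1
  have hd0 : ∀ a ∈ A, walkDist G σ A a = 0 := fun a ha =>
    le_antisymm (by simpa using walkDist_le hσ.1 ha .nil)
      (le_walkDist hG hA fun _ _ w => sum_edges_map_nonneg hσ.1 w)
  have hW0 : ∀ a ∈ A, W a = 0 := fun a ha => by simp [W, hd0 a ha]
  have hW1 : ∀ b ∈ B, W b = 1 := fun b hb =>
    min_eq_right (le_walkDist hG hA fun a ha w => hσ.2 ⟨a, b, w⟩ ⟨ha, hb⟩)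
  have hedge : ∀ x y, G.Adj x y → |W x - W y| ≤ σ s(x, y) := fun x y hxy =>
    (abs_min_sub_min_le_max _ _ _ _).trans (by simpa using abs_walkDist_sub_le hG hA hσ.1 hxy)
  refine (capE_le_capMass G p hW0 hW1).trans (sum_le_sum fun e _ => ?_)
  split_ifs with he
  · induction e using Sym2.ind with
    | h x y => exact Real.rpow_le_rpow (abs_nonneg _) (hedge x y he) hp
  · exact le_rfl

lemma massE_pos_of_admissible (G : SimpleGraph V) {p : ℝ} (hp : p ≠ 0) {Θ : Set (GPath G)}
    (hΘ : Θ.Nonempty) {ρ : Sym2 V → ℝ} (hρ : Admissible G Θ ρ) : 0 < massE G p ρ := by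
  obtain ⟨θ, hθ⟩ := hΘ
  refine (massE_nonneg G p hρ.1).lt_of_ne fun hzero => ?_
  have hvanish : ∀ e ∈ θ.2.2.edges, ρ e = 0 := fun e he => by
    have hterm := (sum_eq_zero_iff_of_nonneg fun e _ => ?_).mp hzero.symm e (mem_univ e)
    · rw [if_pos (θ.2.2.edges_subset_edgeSet he)] at hterm
      exact (Real.rpow_eq_zero (hρ.1 e) hp).mp hterm
    · split_ifs
      · exact Real.rpow_nonneg (hρ.1 _) p
      · exact le_rfl
  have hlen : lenρ G ρ θ = 0 := List.sum_eq_zero fun r hr => by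
    obtain ⟨e, he, rfl⟩ := List.mem_map.mp hr
    exact hvanish e he
  linarith [hρ.2 θ hθ]

lemma capMass_pos {G : SimpleGraph V} (hG : G.Connected) {p : ℝ} (hp : p ≠ 0)
    {A B : Finset V} (hA : A.Nonempty) (hB : B.Nonempty) {U : V → ℝ}
    (hU0 : ∀ a ∈ A, U a = 0) (hU1 : ∀ b ∈ B, U b = 1) : 0 < capMass G p U := by
  obtain ⟨a, ha⟩ := hA
  obtain ⟨b, hb⟩ := hB
  rw [← massE_gradDensity]
  have hΘ : (pathsBetween G (↑A : Set V) (↑B : Set V)).Nonempty :=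
    ⟨⟨a, b, (hG.preconnected a b).some⟩, ha, hb⟩
  exact massE_pos_of_admissible G hp hΘ (admissible_gradDensity G hU0 hU1)

lemma modE_pathsBetween_eq_capMass {G : SimpleGraph V} (hG : G.Connected) {p : ℝ}
    (hp : 0 ≤ p) {A B : Finset V} (hA : A.Nonempty) {U : V → ℝ}
    (hU0 : ∀ a ∈ A, U a = 0) (hU1 : ∀ b ∈ B, U b = 1) (hUmin : capMass G p U = CapE G p A B) :
    ModE G p (pathsBetween G (↑A : Set V) (↑B : Set V)) = capMass G p U := by
  have hgrad := admissible_gradDensity G hU0 hU1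
  refine le_antisymm ?_ ?_
  · exact csInf_le ⟨0, by rintro _ ⟨σ, hσ, rfl⟩; exact massE_nonneg G p hσ.1⟩
      ⟨_, hgrad, massE_gradDensity G p U⟩
  · refine le_csInf ⟨_, _, hgrad, rfl⟩ ?_
    rintro _ ⟨σ, hσ, rfl⟩
    exact hUmin ▸ capE_le_massE G hG hp hA hσ

lemma isOptDensityE_gradDensity {G : SimpleGraph V} (hG : G.Connected) {p : ℝ} (hp : 0 ≤ p)
    {A B : Finset V} (hA : A.Nonempty) {U : V → ℝ}
    (hU0 : ∀ a ∈ A, U a = 0) (hU1 : ∀ b ∈ B, U b = 1) (hUmin : capMass G p U = CapE G p A B) :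
    IsOptDensityE G p (pathsBetween G (↑A : Set V) (↑B : Set V)) (gradDensity G U) :=
  ⟨isDensity_gradDensity G U, admissible_gradDensity G hU0 hU1, fun _ _ hσ =>
    (massE_gradDensity G p U).trans_le (hUmin ▸ capE_le_massE G hG hp hA hσ)⟩

/-- The derivative of `t ↦ E_p(U + t h)` at its minimum `t = 0`. -/
lemma sum_mul_sum_pFlux_eq_zero (G : SimpleGraph V) {p : ℝ} (hp : 1 < p) {U h : V → ℝ}
    (hmin : ∀ t : ℝ, capMass G p U ≤ capMass G p (fun z => U z + t * h z)) :
    ∑ u, h u * ∑ v, pFlux G p U u v = 0 := by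
  set φ : ℝ → ℝ := fun t =>
    ∑ u, ∑ v, if G.Adj u v then |(U u - U v) + t * (h u - h v)| ^ p else 0
  have hφ : ∀ t, φ t = 2 * capMass G p (fun z => U z + t * h z) := fun t => by
    rw [two_mul_capMass]
    exact sum_congr rfl fun u _ => sum_congr rfl fun v _ => by ring_nf
  have hlocal : IsLocalMin φ 0 := Filter.Eventually.of_forall fun t => by
    rw [hφ, hφ]
    simpa using hmin t
  have hderiv : HasDerivAt φ
      (∑ u, ∑ v, if G.Adj u v then p * signPow p (U u - U v) * (h u - h v) else 0) 0 := by
    refine HasDerivAt.fun_sum fun u _ => HasDerivAt.fun_sum fun v _ => ?_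
    by_cases huv : G.Adj u v
    · simpa only [if_pos huv] using hasDerivAt_abs_add_mul_rpow hp (U u - U v) (h u - h v)
    · simpa only [if_neg huv] using hasDerivAt_const (0 : ℝ) (0 : ℝ)
  have hvalue : (∑ u, ∑ v, if G.Adj u v then p * signPow p (U u - U v) * (h u - h v) else 0) =
      p * (2 * ∑ u, h u * ∑ v, pFlux G p U u v) := by
    rw [← sum_sub_mul_eq_two_mul_sum_mul_sum _ (pFlux_antisymm G p U), mul_sum]
    refine sum_congr rfl fun u _ => ?_
    rw [mul_sum]
    refine sum_congr rfl fun v _ => ?_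
    unfold pFlux
    split_ifs <;> ring
  have hzero := hlocal.hasDerivAt_eq_zero hderiv
  rw [hvalue] at hzero
  simpa [(by positivity : p ≠ 0)] using hzero

lemma pHarmOn_of_capMass_eq_capE (G : SimpleGraph V) {p : ℝ} (hp : 1 < p) {A B : Finset V}
    {U : V → ℝ} (hU0 : ∀ a ∈ A, U a = 0) (hU1 : ∀ b ∈ B, U b = 1)
    (hUmin : capMass G p U = CapE G p A B) :
    pHarmOn G p U {x | x ∉ A ∧ x ∉ B} := by
  rintro x ⟨hxA, hxB⟩
  set h : V → ℝ := fun z => if z = x then 1 else 0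
  have hmin : ∀ t : ℝ, capMass G p U ≤ capMass G p (fun z => U z + t * h z) := fun t => by
    rw [hUmin]
    refine capE_le_capMass G p (fun a ha => ?_) (fun b hb => ?_)
    · simp [h, hU0 a ha, ne_of_mem_of_not_mem ha hxA]
    · simp [h, hU1 b hb, ne_of_mem_of_not_mem hb hxB]
  have hx : ∑ v, pFlux G p U x v = 0 := by
    simpa [h] using sum_mul_sum_pFlux_eq_zero G hp hmin
  exact hx

lemma isFlow_ohmFlow (G : SimpleGraph V) {p : ℝ} {A B : Finset V} {U : V → ℝ}
    (hharm : pHarmOn G p U {x | x ∉ A ∧ x ∉ B}) (c : ℝ) : IsFlow G A B (ohmFlow G p U c) := by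
  refine ⟨fun x y => ?_, fun x y hxy => if_neg hxy, fun x hxA hxB => ?_⟩
  · rw [ohmFlow_eq_neg_mul_pFlux, ohmFlow_eq_neg_mul_pFlux, pFlux_antisymm G p U x y]
    ring
  · have hx : ∑ y, pFlux G p U x y = 0 := hharm x ⟨hxA, hxB⟩
    simp only [ohmFlow_eq_neg_mul_pFlux, sum_neg_distrib, ← mul_sum, hx, mul_zero, neg_zero]

lemma sum_sub_mul_eq_two_mul_totalFlow (G : SimpleGraph V) {A B : Finset V} {U : V → ℝ}
    (hU0 : ∀ a ∈ A, U a = 0) (hU1 : ∀ b ∈ B, U b = 1) {F : V → V → ℝ} (hF : IsFlow G A B F) :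
    ∑ u, ∑ v, (U v - U u) * F u v = 2 * totalFlow A F := by
  have hparts := sum_sub_mul_eq_two_mul_sum_mul_sum F hF.1 (fun u => 1 - U u)
  simp only [sub_sub_sub_cancel_left] at hparts
  have hout : ∑ u ∈ univ.filter (fun u => u ∉ A), (1 - U u) * ∑ v, F u v = 0 :=
    sum_eq_zero fun u hu => by
      by_cases huB : u ∈ B
      · rw [hU1 u huB, sub_self, zero_mul]
      · rw [hF.2.2 u (mem_filter.mp hu).2 huB, mul_zero]
  rw [hparts, totalFlow, ← sum_filter_add_sum_filter_not univ (· ∈ A), hout, add_zero,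
    filter_mem_eq_inter, univ_inter]
  exact congrArg (2 * ·) (sum_congr rfl fun u hu => by rw [hU0 u hu, sub_zero, one_mul])

lemma totalFlow_ohmFlow (G : SimpleGraph V) {p : ℝ} (hp : p ≠ 0) {A B : Finset V}
    {U : V → ℝ} (hU0 : ∀ a ∈ A, U a = 0) (hU1 : ∀ b ∈ B, U b = 1)
    (hharm : pHarmOn G p U {x | x ∉ A ∧ x ∉ B}) (c : ℝ) :
    totalFlow A (ohmFlow G p U c) = c * capMass G p U := by
  have hpair : ∑ u, ∑ v, (U v - U u) * ohmFlow G p U c u v = c * (2 * capMass G p U) := by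
    rw [two_mul_capMass, mul_sum]
    refine sum_congr rfl fun u _ => ?_
    rw [mul_sum]
    refine sum_congr rfl fun v _ => ?_
    unfold ohmFlow
    split_ifs
    · rw [mul_left_comm, mul_signPow hp, abs_sub_comm]
    · rw [mul_zero, mul_zero]
  rw [sum_sub_mul_eq_two_mul_totalFlow G hU0 hU1 (isFlow_ohmFlow G hharm c)] at hpair
  linarith

lemma energyQ_ohmFlow (G : SimpleGraph V) {p q : ℝ} (hpq : p.HolderConjugate q) (U : V → ℝ)
    {c : ℝ} (hc : 0 ≤ c) : energyQ G q (ohmFlow G p U c) = c ^ q * capMass G p U := by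
  rw [capMass, mul_sum]
  refine sum_congr rfl fun e _ => ?_
  split_ifs with he
  · induction e using Sym2.ind with
    | h x y =>
      have habs : ∀ {u v}, G.Adj u v → |ohmFlow G p U c u v| = c * |U u - U v| ^ (p - 1) :=
        fun huv => by
          rw [ohmFlow, if_pos huv, abs_mul, abs_of_nonneg hc, abs_signPow hpq.lt.ne',
            abs_sub_comm]
      show (|ohmFlow G p U c x y| ⊔ |ohmFlow G p U c y x|) ^ q = c ^ q * |U x - U y| ^ p
      rw [habs he, habs (G.adj_symm he), abs_sub_comm (U y), max_self,
        Real.mul_rpow hc (Real.rpow_nonneg (abs_nonneg _) _), ← Real.rpow_mul (abs_nonneg _),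
        hpq.sub_one_mul_conj]
  · rw [mul_zero]

lemma one_le_sum_gradDensity_mul_flowDensity (G : SimpleGraph V) {A B : Finset V}
    {U : V → ℝ} (hU0 : ∀ a ∈ A, U a = 0) (hU1 : ∀ b ∈ B, U b = 1) {F : V → V → ℝ}
    (hF : IsFlow G A B F) (hunit : totalFlow A F = 1) :
    1 ≤ ∑ e, gradDensity G U e * flowDensity G F e := by
  have hsupp : ∀ e, gradDensity G U e * flowDensity G F e =
      if e ∈ G.edgeSet then gradDensity G U e * flowDensity G F e else 0 := fun e => by
    split_ifs with he
    · rfl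
    · rw [gradDensity, if_neg he, zero_mul]
  have htwo : 2 * 1 ≤ 2 * ∑ e, gradDensity G U e * flowDensity G F e := by
    calc 2 * 1 = ∑ u, ∑ v, (U v - U u) * F u v := by
          rw [sum_sub_mul_eq_two_mul_totalFlow G hU0 hU1 hF, hunit]
      _ ≤ ∑ u, ∑ v, if G.Adj u v then
            gradDensity G U s(u, v) * flowDensity G F s(u, v) else 0 := by
          refine sum_le_sum fun u _ => sum_le_sum fun v _ => ?_
          split_ifs with huv
          · have he : s(u, v) ∈ G.edgeSet := huv
            show (U v - U u) * F u v ≤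
              (if s(u, v) ∈ G.edgeSet then |U u - U v| else 0) *
                (if s(u, v) ∈ G.edgeSet then |F u v| ⊔ |F v u| else 0)
            rw [if_pos he, if_pos he, abs_sub_comm]
            exact (le_abs_self _).trans ((abs_mul _ _).trans_le
              (mul_le_mul_of_nonneg_left (le_max_left _ _) (abs_nonneg _)))
          · rw [hF.2.1 u v huv, mul_zero]
      _ = 2 * ∑ e, gradDensity G U e * flowDensity G F e := by
          rw [sum_adj_eq_two_nsmul_sum_edgeSet G fun e => gradDensity G U e * flowDensity G F e,
            two_nsmul, two_mul, ← sum_congr rfl fun e _ => hsupp e]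
  linarith

lemma rpow_one_sub_capMass_le_energyQ (G : SimpleGraph V) {p q : ℝ}
    (hpq : p.HolderConjugate q) {A B : Finset V} {U : V → ℝ} (hU0 : ∀ a ∈ A, U a = 0)
    (hU1 : ∀ b ∈ B, U b = 1) {F : V → V → ℝ} (hF : IsFlow G A B F) (hunit : totalFlow A F = 1) :
    capMass G p U ^ (1 - q) ≤ energyQ G q F := by
  have hholder := rpow_one_sub_le_sum_rpow univ hpq (fun e _ => gradDensity_nonneg G U e)
    (fun e _ => flowDensity_nonneg G F e)
    (one_le_sum_gradDensity_mul_flowDensity G hU0 hU1 hF hunit)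
  rwa [← massE_eq_sum_rpow G hpq.ne_zero (ρ := gradDensity G U) fun e he => if_neg he,
    massE_gradDensity, ← massE_eq_sum_rpow G hpq.symm.ne_zero (ρ := flowDensity G F)
      fun e he => if_neg he, massE_flowDensity] at hholder

end Paper

open Paper in
theorem statement5_general {V : Type*} [Fintype V] (G : SimpleGraph V)
    (hG : G.Connected) (p q : ℝ) (hp : 1 < p) (hpq : 1 / p + 1 / q = 1)
    (A B : Finset V) (hA : A.Nonempty) (hB : B.Nonempty)
    (U : V → ℝ) (hU0 : ∀ a ∈ A, U a = 0) (hU1 : ∀ b ∈ B, U b = 1)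
    (hUmin : capMass G p U = CapE G p A B) :
    IsOptDensityE G p (pathsBetween G (↑A : Set V) (↑B : Set V))
        (fun e => if e ∈ G.edgeSet then ediff U e else 0) ∧
      (IsFlow G A B
          (fun x y => if G.Adj x y then
            (ModE G p (pathsBetween G (↑A : Set V) (↑B : Set V)))⁻¹ *
              (Real.sign (U y - U x) * |U y - U x| ^ (p - 1)) else 0) ∧
        totalFlow A
          (fun x y => if G.Adj x y then
            (ModE G p (pathsBetween G (↑A : Set V) (↑B : Set V)))⁻¹ *
              (Real.sign (U y - U x) * |U y - U x| ^ (p - 1)) else 0) = 1 ∧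
        energyQ G q
          (fun x y => if G.Adj x y then
            (ModE G p (pathsBetween G (↑A : Set V) (↑B : Set V)))⁻¹ *
              (Real.sign (U y - U x) * |U y - U x| ^ (p - 1)) else 0) = EminQ G q A B ∧
        ∀ F' : V → V → ℝ, IsFlow G A B F' → totalFlow A F' = 1 →
          energyQ G q
            (fun x y => if G.Adj x y then
              (ModE G p (pathsBetween G (↑A : Set V) (↑B : Set V)))⁻¹ *
                (Real.sign (U y - U x) * |U y - U x| ^ (p - 1)) else 0) ≤
            energyQ G q F') := by
  have hconj : p.HolderConjugate q :=
    Real.holderConjugate_iff.mpr ⟨hp, by simpa only [one_div] using hpq⟩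
  have hMod := modE_pathsBetween_eq_capMass hG hconj.nonneg hA hU0 hU1 hUmin
  have hpos := capMass_pos hG hconj.ne_zero hA hB hU0 hU1
  have hharm := pHarmOn_of_capMass_eq_capE G hp hU0 hU1 hUmin
  set M := ModE G p (pathsBetween G (↑A : Set V) (↑B : Set V))
  have hflow : IsFlow G A B (ohmFlow G p U M⁻¹) := isFlow_ohmFlow G hharm M⁻¹
  have hunit : totalFlow A (ohmFlow G p U M⁻¹) = 1 := by
    rw [totalFlow_ohmFlow G hconj.ne_zero hU0 hU1 hharm, hMod, inv_mul_cancel₀ hpos.ne']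
  have hleast : ∀ F', IsFlow G A B F' → totalFlow A F' = 1 →
      energyQ G q (ohmFlow G p U M⁻¹) ≤ energyQ G q F' := fun F' hF' hunit' => by
    have hpow : (capMass G p U)⁻¹ ^ q * capMass G p U = capMass G p U ^ (1 - q) := by
      rw [Real.rpow_sub hpos, Real.rpow_one, Real.inv_rpow hpos.le, inv_mul_eq_div]
    rw [energyQ_ohmFlow G hconj U (inv_nonneg.mpr (hMod ▸ hpos.le)), hMod, hpow]
    exact rpow_one_sub_capMass_le_energyQ G hconj hU0 hU1 hF' hunit'
  refine ⟨isOptDensityE_gradDensity hG hconj.nonneg hA hU0 hU1 hUmin, hflow, hunit, ?_, hleast⟩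
  have hmin : IsLeast {m | ∃ F, IsFlow G A B F ∧ totalFlow A F = 1 ∧ energyQ G q F = m}
      (energyQ G q (ohmFlow G p U M⁻¹)) :=
    ⟨⟨_, hflow, hunit, rfl⟩, by rintro _ ⟨F', hF', hunit', rfl⟩; exact hleast F' hF' hunit'⟩
  exact hmin.csInf_eq.symm

open Paper in
/-- Discrete Ohm's law: if `Û` is the capacity-minimizing potential
(`Û = 0` on `A`, `Û = 1` on `B`, achieving `Cap_p(A,B,G)`), then the optimal
`Θ(A,B)`-admissible density is `ρ̂({x,y}) = |Û(x) − Û(y)|` and the energy-minimizing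
unit flow is `F(x,y) = Mod_p(Θ(A,B),G)⁻¹ · sgn(Û(y)−Û(x))·|Û(y)−Û(x)|^{p−1}`. -/
theorem statement5 {V : Type*} [Fintype V] [DecidableEq V] (G : SimpleGraph V)
    (hG : G.Connected) (p q : ℝ) (hp : 1 < p) (hpq : 1 / p + 1 / q = 1)
    (A B : Finset V) (hA : A.Nonempty) (hB : B.Nonempty) (hAB : Disjoint A B)
    (U : V → ℝ) (hU0 : ∀ a ∈ A, U a = 0) (hU1 : ∀ b ∈ B, U b = 1)
    (hUmin : capMass G p U = CapE G p A B) :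
    IsOptDensityE G p (pathsBetween G (↑A : Set V) (↑B : Set V))
        (fun e => if e ∈ G.edgeSet then ediff U e else 0) ∧
      (IsFlow G A B
          (fun x y => if G.Adj x y then
            (ModE G p (pathsBetween G (↑A : Set V) (↑B : Set V)))⁻¹ *
              (Real.sign (U y - U x) * |U y - U x| ^ (p - 1)) else 0) ∧
        totalFlow A
          (fun x y => if G.Adj x y then
            (ModE G p (pathsBetween G (↑A : Set V) (↑B : Set V)))⁻¹ *
              (Real.sign (U y - U x) * |U y - U x| ^ (p - 1)) else 0) = 1 ∧
        energyQ G q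
          (fun x y => if G.Adj x y then
            (ModE G p (pathsBetween G (↑A : Set V) (↑B : Set V)))⁻¹ *
              (Real.sign (U y - U x) * |U y - U x| ^ (p - 1)) else 0) = EminQ G q A B ∧
        ∀ F' : V → V → ℝ, IsFlow G A B F' → totalFlow A F' = 1 →
          energyQ G q
            (fun x y => if G.Adj x y then
              (ModE G p (pathsBetween G (↑A : Set V) (↑B : Set V)))⁻¹ *
                (Real.sign (U y - U x) * |U y - U x| ^ (p - 1)) else 0) ≤
            energyQ G q F') :=
  statement5_general G hG p q hp hpq A B hA hB U hU0 hU1 hUmin
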